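/- arXiv:2312.04235 — 2 statements merged into one kernel-verified Lean document; each statement's English description precedes it below -/
import Mathlib

section
/- For every natural number h there exists a constant c such that the following holds: for every graph G of highway dimension at most h, every vertex v ∈ V, and every r > 0, there exists a set V' ⊆ V with |V'| ≤ c such that B(v,2r) ⊆ ∪_{v' ∈ V'} B(v',r). (Graphs of bounded highway dimension have bounded doubling dimension.) -/
open SimpleGraph

/-- The length (total weight) of a walk under an edge-weight function `w`. -/
noncomputable def wlen {V : Type*} {G : SimpleGraph V} (w : Sym2 V → ℝ) {u v : V}
    (p : G.Walk u v) : ℝ :=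
  (p.edges.map w).sum

/-- `p` is a subwalk (subpath) of `q`. -/
def IsSubwalk {V : Type*} {G : SimpleGraph V} {u v a b : V}
    (p : G.Walk u v) (q : G.Walk a b) : Prop :=
  ∃ (q1 : G.Walk a u) (q2 : G.Walk v b), q = (q1.append p).append q2

/-- Shortest-path distance as the infimum of walk lengths. -/
noncomputable def wdist {V : Type*} (G : SimpleGraph V) (w : Sym2 V → ℝ) (u v : V) : ℝ :=
  sInf {x : ℝ | ∃ p : G.Walk u v, x = wlen w p}

/-- A finite connected positively-weighted graph (all weights at least 1) with
unique shortest paths, in which every edge is the unique shortest path between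
its endpoints.  `sp u v` is the unique shortest path from `u` to `v`. -/
structure Setting (V : Type) [Fintype V] where
  G : SimpleGraph V
  w : Sym2 V → ℝ
  connected : G.Connected
  one_le_w : ∀ e ∈ G.edgeSet, 1 ≤ w e
  sp : ∀ u v : V, G.Walk u v
  sp_isPath : ∀ u v : V, (sp u v).IsPath
  sp_shortest : ∀ (u v : V) (q : G.Walk u v), wlen w (sp u v) ≤ wlen w q
  sp_unique : ∀ (u v : V) (q : G.Walk u v), q.IsPath →
    wlen w q = wlen w (sp u v) → q = sp u v
  edge_sp : ∀ (u v : V) (h : G.Adj u v),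
    sp u v = SimpleGraph.Walk.cons h SimpleGraph.Walk.nil

namespace Setting

variable {V : Type} [Fintype V]

/-- Shortest-path distance `d(u,v)`. -/
noncomputable def d (S : Setting V) (u v : V) : ℝ := wlen S.w (S.sp u v)

/-- The ball `B(v,r)`. -/
def ball (S : Setting V) (v : V) (r : ℝ) : Set V := {u : V | S.d v u ≤ r}

/-- `maxedge(p(u,v)) ≤ r`: every edge of the shortest path has weight at most `r`. -/
def maxedgeLE (S : Setting V) (u v : V) (r : ℝ) : Prop :=
  ∀ e ∈ (S.sp u v).edges, S.w e ≤ r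

/-- An `(r,k)` vertex cover. -/
def IsVertexCover (S : Setting V) (r : ℝ) (k : ℕ) (C : Set V) : Prop :=
  (∀ v1 v2 : V, r < S.d v1 v2 → S.maxedgeLE v1 v2 r →
      ∃ c ∈ C, c ∈ (S.sp v1 v2).support) ∧
  (∀ v : V, (S.ball v (2 * r) ∩ C).ncard ≤ k)

/-- Discrete highway dimension at most `h`. -/
def DiscreteHDLE (S : Setting V) (h : ℕ) : Prop :=
  ∀ (v : V) (r : ℝ), 0 < r →
    ∃ C : Set V, C.ncard ≤ h ∧
      ∀ v1 v2 : V, (∀ x ∈ (S.sp v1 v2).support, x ∈ S.ball v (4 * r)) →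
        r < S.d v1 v2 → ∃ c ∈ C, c ∈ (S.sp v1 v2).support

/-- The (unique) shortest path from `v1` to `v2` is `r`-significant:
it has an `r`-witness. -/
def RSignificant (S : Setting V) (r : ℝ) (v1 v2 : V) : Prop :=
  ∃ a b : V, (a = v1 ∨ S.G.Adj a v1) ∧ (b = v2 ∨ S.G.Adj b v2) ∧
    r ≤ S.d a b ∧ IsSubwalk (S.sp v1 v2) (S.sp a b)

/-- The shortest path from `v1` to `v2` is `(r,2r)`-close to `v`,
i.e. it belongs to `S(v,r)`. -/
def InSvr (S : Setting V) (v : V) (r : ℝ) (v1 v2 : V) : Prop :=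
  ∃ a b : V, (a = v1 ∨ S.G.Adj a v1) ∧ (b = v2 ∨ S.G.Adj b v2) ∧
    r ≤ S.d a b ∧ IsSubwalk (S.sp v1 v2) (S.sp a b) ∧
    ∃ x ∈ (S.sp a b).support, S.d v x ≤ 2 * r

/-- Highway dimension at most `h`. -/
def HighwayDimLE (S : Setting V) (h : ℕ) : Prop :=
  ∀ (r : ℝ), 0 < r → ∀ v : V,
    ∃ C : Set V, C.ncard ≤ h ∧
      ∀ v1 v2 : V, S.InSvr v r v1 v2 → ∃ c ∈ C, c ∈ (S.sp v1 v2).support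

/-- An `(r,h')`-SPHS. -/
def IsSPHS (S : Setting V) (r : ℝ) (h' : ℕ) (C : Set V) : Prop :=
  (∀ v1 v2 : V, S.RSignificant r v1 v2 → ∃ c ∈ C, c ∈ (S.sp v1 v2).support) ∧
  (∀ v : V, (C ∩ S.ball v (2 * r)).ncard ≤ h')

/-- Adjacency in the `r`-shortcut graph `G(C,r)`. -/
def shortcutAdj (S : Setting V) (C : Set V) (r : ℝ) (v1 v2 : V) : Prop :=
  v1 ≠ v2 ∧ v1 ∈ C ∧ v2 ∈ C ∧ S.d v1 v2 ≤ r ∧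
    ∀ c ∈ C, c ∈ (S.sp v1 v2).support → c = v1 ∨ c = v2

/-- An `(r,η)` path cover, a set of shortest paths represented by their
endpoint pairs. -/
def IsPathCover (S : Setting V) (r : ℝ) (η : ℕ) (P : Set (V × V)) : Prop :=
  (∀ q ∈ P, r / 4 ≤ S.d q.1 q.2 ∧ S.d q.1 q.2 ≤ r) ∧
  (∀ v1 v2 : V, r / 2 ≤ S.d v1 v2 → S.d v1 v2 ≤ r → S.maxedgeLE v1 v2 (r / 8) →
    ∃ q ∈ P, IsSubwalk (S.sp q.1 q.2) (S.sp v1 v2) ∧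
      S.d v1 q.1 ≤ r / 8 ∧ S.d q.2 v2 ≤ r / 8) ∧
  (∀ v : V, {q ∈ P | ∃ x ∈ (S.sp q.1 q.2).support, S.d v x ≤ 4 * r}.ncard ≤ η)

/-- A pair of vertices of `Cm` is *considered* at level `i`. -/
def Considered (S : Setting V) (Cm : Set V) (i : ℤ) (q : V × V) : Prop :=
  q.1 ∈ Cm ∧ q.2 ∈ Cm ∧
    3 / 4 * (8 : ℝ) ^ i ≤ S.d q.1 q.2 ∧ S.d q.1 q.2 ≤ (8 : ℝ) ^ i ∧
    S.maxedgeLE q.1 q.2 ((8 : ℝ) ^ (i - 1))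

/-- `C'` is a valid output of the greedy construction at level `i` from `Cm`. -/
def ValidGreedy (S : Setting V) (Cm : Set V) (i : ℤ) (C' : Set V) : Prop :=
  ∃ (m : ℕ) (q : Fin m → V × V),
    Function.Injective q ∧
    (∀ p : V × V, S.Considered Cm i p ↔ ∃ j : Fin m, q j = p) ∧
    ∃ Sc : Fin (m + 1) → Set V,
      Sc 0 = ∅ ∧ Sc (Fin.last m) = C' ∧
      ∀ j : Fin m,
        ((∃ c ∈ Sc j.castSucc, c ∈ (S.sp (q j).1 (q j).2).support) →
          Sc j.succ = Sc j.castSucc) ∧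
        ((¬ ∃ c ∈ Sc j.castSucc, c ∈ (S.sp (q j).1 (q j).2).support) →
          ∃ c ∈ Cm, c ∈ (S.sp (q j).1 (q j).2).support ∧
            (∀ c' ∈ Cm, c' ∈ (S.sp (q j).1 (q j).2).support →
              |S.d (q j).1 c - S.d (q j).1 (q j).2 / 2| ≤
                |S.d (q j).1 c' - S.d (q j).1 (q j).2 / 2|) ∧
            Sc j.succ = insert c (Sc j.castSucc))

/-- The set of endpoints of edges of weight greater than `t`. -/
def bigEdgeEnds (S : Setting V) (t : ℝ) : Set V :=
  {x : V | ∃ e ∈ S.G.edgeSet, t < S.w e ∧ x ∈ e}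

end Setting

namespace Setting

variable {V : Type} [Fintype V]

lemma wlen_nonneg (S : Setting V) {u v : V} (p : S.G.Walk u v) : 0 ≤ wlen S.w p := by
  unfold wlen
  apply List.sum_nonneg
  intro x hx
  obtain ⟨e, he, rfl⟩ := List.mem_map.1 hx
  have := S.one_le_w e (p.edges_subset_edgeSet he)
  linarith

lemma d_nonneg (S : Setting V) (u v : V) : 0 ≤ S.d u v := S.wlen_nonneg _

lemma d_self (S : Setting V) (v : V) : S.d v v = 0 :=
  le_antisymm (by simpa [wlen, Setting.d] using S.sp_shortest v v Walk.nil) (S.d_nonneg v v)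

lemma wlen_cons (S : Setting V) {u v x : V} (h : S.G.Adj u v) (p : S.G.Walk v x) :
    wlen S.w (Walk.cons h p) = S.w s(u, v) + wlen S.w p := by
  simp [wlen]

lemma tail_sp (S : Setting V) {u v x : V} (h : S.G.Adj u v) (p : S.G.Walk v x)
    (heq : Walk.cons h p = S.sp u x) : p = S.sp v x := by
  have hpath : (Walk.cons h p).IsPath := heq ▸ S.sp_isPath u x
  have hp : p.IsPath := hpath.of_cons
  apply S.sp_unique v x p hp
  have h1 : wlen S.w (S.sp v x) ≤ wlen S.w p := S.sp_shortest v x p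
  have h2 : wlen S.w (Walk.cons h p) ≤ wlen S.w (Walk.cons h (S.sp v x)) := by
    rw [heq]; exact S.sp_shortest u x _
  rw [S.wlen_cons, S.wlen_cons] at h2
  linarith

lemma d_suffix (S : Setting V) : ∀ {u x : V} (p : S.G.Walk u x), p = S.sp u x →
    ∀ c ∈ p.support, S.d c x ≤ wlen S.w p := by
  intro u x p
  induction p with
  | nil =>
    intro hn c hc
    simp only [Walk.support_nil, List.mem_singleton] at hc
    subst hc
    simp [Setting.d, ← hn, wlen]
  | @cons u v x h q ih =>
    intro heq c hc
    have hq : q = S.sp v x := S.tail_sp h q heq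
    rw [Walk.support_cons, List.mem_cons] at hc
    rcases hc with rfl | hc
    · rw [heq]; exact le_of_eq rfl
    · have h1 : S.d c x ≤ wlen S.w q := ih hq c hc
      have h2 : 1 ≤ S.w s(u, v) := S.one_le_w _ (S.G.mem_edgeSet.2 h)
      rw [S.wlen_cons]
      linarith

lemma exists_step (S : Setting V) {r : ℝ} : ∀ {v x : V} (p : S.G.Walk v x),
    p = S.sp v x → r < S.d v x → 0 ≤ r →
    ∃ u' u, ∃ h : S.G.Adj u' u, S.sp u' x = Walk.cons h (S.sp u x) ∧
      r < S.d u' x ∧ S.d u x ≤ r := by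
  intro v x p
  induction p with
  | nil =>
    intro _ hlt hr
    rw [S.d_self] at hlt
    linarith
  | @cons v w x h q ih =>
    intro heq hlt hr
    have hq : q = S.sp w x := S.tail_sp h q heq
    by_cases hc : S.d w x ≤ r
    · exact ⟨v, w, h, by rw [← heq, hq], hlt, hc⟩
    · push_neg at hc
      exact ih hq hc hr

end Setting

/-- Bounded highway dimension implies bounded doubling:
`B(v,2r)` is covered by a bounded number of balls of radius `r`. -/
theorem stmt2 (h : ℕ) :
    ∃ c : ℕ, ∀ (V : Type) [Fintype V] (S : Setting V), S.HighwayDimLE h →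
      ∀ (v : V) (r : ℝ), 0 < r →
        ∃ V' : Set V, V'.ncard ≤ c ∧ S.ball v (2 * r) ⊆ ⋃ v' ∈ V', S.ball v' r := by
  refine ⟨h + 1, ?_⟩
  intro V _ S hHD v r hr
  obtain ⟨C, hCcard, hhit⟩ := hHD r hr v
  refine ⟨insert v C, ?_, ?_⟩
  · calc (insert v C).ncard ≤ C.ncard + 1 := Set.ncard_insert_le v C
      _ ≤ h + 1 := by omega
  · intro x hx
    have hx2 : S.d v x ≤ 2 * r := hx
    by_cases hcase : S.d v x ≤ r
    · exact Set.mem_biUnion (Set.mem_insert v C) hcase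
    · push_neg at hcase
      obtain ⟨u', u, hadj, hsp, hgt, hle⟩ :=
        S.exists_step (S.sp v x) rfl hcase hr.le
      have hin : S.InSvr v r u x := by
        refine ⟨u', x, Or.inr hadj, Or.inl rfl, le_of_lt hgt, ?_,
          x, Walk.end_mem_support _, hx2⟩
        refine ⟨Walk.cons hadj Walk.nil, Walk.nil, ?_⟩
        rw [hsp]
        simp
      obtain ⟨c, hcC, hcs⟩ := hhit u x hin
      have hdc : S.d c x ≤ S.d u x := S.d_suffix (S.sp u x) rfl c hcs
      exact Set.mem_biUnion (Set.mem_insert_of_mem v hcC) (le_trans hdc hle)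
end

section
/- For all natural numbers h and k there exists a constant c such that the following holds: if G is a graph of highway dimension at most h, r > 0, and C is an (r,k) vertex cover of G containing both endpoints of every edge of G of weight greater than r/8, then C is a (3r, c)-SPHS of G. -/
open SimpleGraph

namespace StmtAux

open SimpleGraph Walk

variable {V : Type} [Fintype V]

lemma wlen_nil {G : SimpleGraph V} (w : Sym2 V → ℝ) {u : V} :
    wlen w (Walk.nil : G.Walk u u) = 0 := by simp [wlen]

lemma wlen_cons {G : SimpleGraph V} (w : Sym2 V → ℝ) {u v x : V} (h : G.Adj u v)
    (p : G.Walk v x) : wlen w (Walk.cons h p) = w s(u, v) + wlen w p := by simp [wlen]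

lemma wlen_append {G : SimpleGraph V} (w : Sym2 V → ℝ) {u v x : V} (p : G.Walk u v)
    (q : G.Walk v x) : wlen w (p.append q) = wlen w p + wlen w q := by
  simp [wlen, Walk.edges_append]

lemma wlen_nonneg (S : Setting V) {u v : V} (p : S.G.Walk u v) : 0 ≤ wlen S.w p := by
  unfold wlen
  apply List.sum_nonneg
  intro x hx
  obtain ⟨e, he, rfl⟩ := List.mem_map.mp hx
  have := S.one_le_w e (p.edges_subset_edgeSet he)
  linarith

lemma d_le (S : Setting V) {u v : V} (q : S.G.Walk u v) : S.d u v ≤ wlen S.w q :=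
  S.sp_shortest u v q

lemma d_nonneg (S : Setting V) (u v : V) : 0 ≤ S.d u v := wlen_nonneg S _

lemma d_self (S : Setting V) (v : V) : S.d v v = 0 :=
  le_antisymm (by simpa [wlen_nil] using d_le S (Walk.nil : S.G.Walk v v)) (d_nonneg S v v)

lemma d_adj (S : Setting V) {u v : V} (h : S.G.Adj u v) : S.d u v = S.w s(u, v) := by
  show wlen S.w (S.sp u v) = _
  rw [S.edge_sp u v h, wlen_cons, wlen_nil]; ring

lemma split3 (S : Setting V) {a v1 v2 b : V} (q1 : S.G.Walk a v1) (p : S.G.Walk v1 v2)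
    (q2 : S.G.Walk v2 b) (hsp : S.sp a b = (q1.append p).append q2) :
    wlen S.w q1 = S.d a v1 ∧ wlen S.w p = S.d v1 v2 ∧ wlen S.w q2 = S.d v2 b := by
  have e0 : S.d a b = wlen S.w (S.sp a b) := rfl
  have e1 : S.d a v1 = wlen S.w (S.sp a v1) := rfl
  have e2 : S.d v1 v2 = wlen S.w (S.sp v1 v2) := rfl
  have e3 : S.d v2 b = wlen S.w (S.sp v2 b) := rfl
  have hL : wlen S.w (S.sp a b) = wlen S.w q1 + wlen S.w p + wlen S.w q2 := by
    rw [hsp, wlen_append, wlen_append]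
  have h1 := d_le S ((S.sp a v1).append (p.append q2))
  have h2 := d_le S ((q1.append (S.sp v1 v2)).append q2)
  have h3 := d_le S ((q1.append p).append (S.sp v2 b))
  rw [wlen_append, wlen_append] at h1 h2 h3
  have g1 := d_le S q1
  have g2 := d_le S p
  have g3 := d_le S q2
  exact ⟨by linarith, by linarith, by linarith⟩

lemma d_le_of_mem_support (S : Setting V) {u v c : V} (q : S.G.Walk u v)
    (hc : c ∈ q.support) : S.d c v ≤ wlen S.w q := by
  classical
  have hspec := q.take_spec hc
  have h1 := d_le S (q.dropUntil c hc)
  have h2 := wlen_nonneg S (q.takeUntil c hc)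
  have h3 : wlen S.w q = wlen S.w (q.takeUntil c hc) + wlen S.w (q.dropUntil c hc) := by
    conv_lhs => rw [← hspec]
    rw [wlen_append]
  linarith

lemma exists_mem_support_of_mem_edges {G : SimpleGraph V} {u v : V} {p : G.Walk u v}
    {e : Sym2 V} (he : e ∈ p.edges) : ∃ x, x ∈ e ∧ x ∈ p.support := by
  induction e using Sym2.ind with
  | _ x y => exact ⟨x, Sym2.mem_mk_left x y, p.fst_mem_support_of_mem_edges he⟩

lemma exists_threshold (S : Setting V) {t : ℝ} (ht : 0 < t) :
    ∀ {x y : V} (p : S.G.Walk x y), t ≤ wlen S.w p →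
    ∃ (u₀ z : V) (hadj : S.G.Adj u₀ z) (pre : S.G.Walk x u₀) (suf : S.G.Walk z y),
      p = pre.append (Walk.cons hadj suf) ∧ t ≤ wlen S.w (Walk.cons hadj suf) ∧
        wlen S.w suf < t := by
  intro x y p
  induction p with
  | nil => intro hle; rw [wlen_nil] at hle; linarith
  | @cons x x' y h q ih =>
    intro hle
    by_cases hq : wlen S.w q < t
    · exact ⟨x, x', h, Walk.nil, q, by rw [Walk.nil_append], hle, hq⟩
    · push_neg at hq
      obtain ⟨u₀, z, hadj, pre, suf, heq, hge, hlt⟩ := ih hq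
      exact ⟨u₀, z, hadj, Walk.cons h pre, suf, by rw [heq, Walk.cons_append], hge, hlt⟩

lemma ncard_biUnion_le (f : V → Set V) (k : ℕ) {F : Set V} :
    (∀ x ∈ F, (f x).ncard ≤ k) → (⋃ x ∈ F, f x).ncard ≤ F.ncard * k := by
  refine Set.Finite.induction_on
    (motive := fun F _ => (∀ x ∈ F, (f x).ncard ≤ k) → (⋃ x ∈ F, f x).ncard ≤ F.ncard * k)
    F (Set.toFinite F) (by intro _; simp) ?_
  intro a s ha hs ih hf
  rw [Set.biUnion_insert]
  calc ((f a) ∪ ⋃ x ∈ s, f x).ncard ≤ (f a).ncard + (⋃ x ∈ s, f x).ncard :=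
        Set.ncard_union_le _ _
    _ ≤ k + s.ncard * k := by
        gcongr
        · exact hf a (Set.mem_insert a s)
        · exact ih (fun x hx => hf x (Set.mem_insert_of_mem a hx))
    _ = (s.ncard + 1) * k := by ring
    _ = (insert a s).ncard * k := by rw [Set.ncard_insert_of_notMem ha]

end StmtAux

open StmtAux

/-- An `(r,k)` vertex cover containing both endpoints of every
edge of weight greater than `r/8` is a `(3r,c)`-SPHS. -/
theorem stmt11 (h k : ℕ) :
    ∃ c : ℕ, ∀ (V : Type) [Fintype V] (S : Setting V), S.HighwayDimLE h →
      ∀ r : ℝ, 0 < r → ∀ C : Set V, S.IsVertexCover r k C →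
        (∀ e ∈ S.G.edgeSet, r / 8 < S.w e → ∀ x ∈ e, x ∈ C) →
        S.IsSPHS (3 * r) c C := by
  refine ⟨(h + 1) * k, ?_⟩
  intro V _ S hHD r hr C hVC hbig
  constructor
  · -- hitting all (3r)-significant paths
    rintro v1 v2 ⟨a, b, ha, hb, hd3, q1, q2, hsp⟩
    by_cases hheavy : ∃ e ∈ (S.sp v1 v2).edges, r / 8 < S.w e
    · obtain ⟨e, he, hwe⟩ := hheavy
      obtain ⟨x, hxe, hxs⟩ := exists_mem_support_of_mem_edges he
      exact ⟨x, hbig e ((S.sp v1 v2).edges_subset_edgeSet he) hwe x hxe, hxs⟩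
    · push_neg at hheavy
      obtain ⟨hq1, hp, hq2⟩ := split3 S q1 (S.sp v1 v2) q2 hsp
      by_cases hca : r / 8 < S.d a v1
      · rcases ha with rfl | ha
        · rw [d_self] at hca; linarith
        · have hwa : r / 8 < S.w s(a, v1) := by rw [← d_adj S ha]; exact hca
          exact ⟨v1, hbig _ (S.G.mem_edgeSet.mpr ha) hwa v1 (Sym2.mem_mk_right a v1),
            (S.sp v1 v2).start_mem_support⟩
      · by_cases hcb : r / 8 < S.d v2 b
        · rcases hb with rfl | hb
          · rw [d_self] at hcb; linarith
          · have hb' : S.G.Adj v2 b := hb.symm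
            have hwb : r / 8 < S.w s(v2, b) := by rw [← d_adj S hb']; exact hcb
            exact ⟨v2, hbig _ (S.G.mem_edgeSet.mpr hb') hwb v2 (Sym2.mem_mk_left v2 b),
              (S.sp v1 v2).end_mem_support⟩
        · push_neg at hca hcb
          have hdab : S.d a b = S.d a v1 + S.d v1 v2 + S.d v2 b := by
            have h0 : S.d a b = wlen S.w q1 + wlen S.w (S.sp v1 v2) + wlen S.w q2 := by
              show wlen S.w (S.sp a b) = _
              rw [hsp, wlen_append, wlen_append]
            rw [h0, hq1, hp, hq2]
          have hd12 : r < S.d v1 v2 := by linarith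
          have hme : S.maxedgeLE v1 v2 r := fun e hee => le_trans (hheavy e hee) (by linarith)
          exact hVC.1 v1 v2 hd12 hme
  · -- sparsity
    intro v
    obtain ⟨H, hHcard, hHhit⟩ := hHD (2 * r) (by linarith) v
    have hcover : C ∩ S.ball v (2 * (3 * r)) ⊆ ⋃ x ∈ insert v H, (C ∩ S.ball x (2 * r)) := by
      rintro y ⟨hyC, hyB⟩
      have hy6 : S.d v y ≤ 2 * (3 * r) := hyB
      simp only [Set.mem_iUnion, Set.mem_inter_iff, exists_prop]
      by_cases hnear : S.d v y ≤ 2 * r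
      · exact ⟨v, Set.mem_insert v H, hyC, hnear⟩
      · push_neg at hnear
        have hw : 2 * r ≤ wlen S.w (S.sp v y) := le_of_lt hnear
        obtain ⟨u₀, z, hadj, pre, suf, heq, hge, hlt⟩ :=
          exists_threshold S (by linarith) (S.sp v y) hw
        have heq3 : S.sp v y = (pre.append (Walk.cons hadj Walk.nil)).append suf := by
          rw [heq, ← Walk.append_assoc, Walk.cons_append, Walk.nil_append]
        obtain ⟨hpre, hedge, hsuf⟩ := split3 S pre (Walk.cons hadj Walk.nil) suf heq3
        have heq2 : S.sp v y = (pre.append (Walk.cons hadj suf)).append Walk.nil := by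
          rw [Walk.append_nil]; exact heq
        obtain ⟨-, hcs, -⟩ := split3 S pre (Walk.cons hadj suf) Walk.nil heq2
        -- path facts
        have hP : (pre.append (Walk.cons hadj suf)).IsPath := by rw [← heq]; exact S.sp_isPath v y
        have hPcs : (Walk.cons hadj suf).IsPath := hP.of_append_right
        have hPsuf : suf.IsPath := hPcs.of_cons
        have hsufU : suf = S.sp z y := S.sp_unique z y suf hPsuf hsuf
        have hcsU : Walk.cons hadj suf = S.sp u₀ y := S.sp_unique u₀ y _ hPcs hcs
        have hduy : 2 * r ≤ S.d u₀ y := by rw [← hcs]; exact hge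
        have hdzy : S.d z y < 2 * r := by rw [← hsuf]; exact hlt
        have hdvy : S.d v y = S.d v u₀ + S.d u₀ y := by
          have h0 : S.d v y = wlen S.w pre + wlen S.w (Walk.cons hadj suf) := by
            show wlen S.w (S.sp v y) = _
            rw [heq, wlen_append]
          rw [h0, hpre, hcs]
        have hIn : S.InSvr v (2 * r) z y := by
          refine ⟨u₀, y, Or.inr hadj, Or.inl rfl, by rw [← hcs]; exact hge, ?_, ?_⟩
          · refine ⟨Walk.cons hadj Walk.nil, Walk.nil, ?_⟩
            rw [Walk.append_nil, Walk.cons_append, Walk.nil_append, ← hsufU, ← hcsU]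
          · exact ⟨u₀, (S.sp u₀ y).start_mem_support, by linarith⟩
        obtain ⟨c, hcH, hcsupp⟩ := hHhit z y hIn
        refine ⟨c, Set.mem_insert_of_mem v hcH, hyC, ?_⟩
        have hdc : S.d c y ≤ wlen S.w (S.sp z y) := d_le_of_mem_support S (S.sp z y) hcsupp
        have : wlen S.w (S.sp z y) = S.d z y := rfl
        show S.d c y ≤ 2 * r
        linarith
    calc (C ∩ S.ball v (2 * (3 * r))).ncard
        ≤ (⋃ x ∈ insert v H, (C ∩ S.ball x (2 * r))).ncard :=
          Set.ncard_le_ncard hcover (Set.toFinite _)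
      _ ≤ (insert v H).ncard * k := by
          apply ncard_biUnion_le
          intro x _
          have := hVC.2 x
          rw [Set.inter_comm]
          exact this
      _ ≤ (h + 1) * k := by
          have h1 : (insert v H).ncard ≤ H.ncard + 1 := Set.ncard_insert_le v H
          have : (insert v H).ncard ≤ h + 1 := by omega
          exact Nat.mul_le_mul_right k this
end
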